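/- For c > 0, the 2+4 product model on ℝ⁶ with μ = 3 and λ = c⁻¹ (modeling S²(curvature 3) × S⁴(curvature c⁻¹)) satisfies L₁ = 12(3 + c⁻¹)²(3 − 3c⁻¹); in particular, as a function of c, L₁ vanishes at c = 1 but its derivative at c = 1 is nonzero. -/

import Mathlib

/-!
In the product model, ḡ = g + h with g, h complementary orthogonal projections, so the Ricci
tensor, P, E and W are combinations of g, h and of the Kulkarni–Nomizu products g∧g, h∧h, g∧h.
Composition of Kulkarni–Nomizu products obeys (A∧B)∘(C∧D) = AC∧BD + AD∧BC, so g∧h composes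
to zero with g∧g and h∧h, and W² stays in the span of the three products. For the 2 + 4 splitting,
W = (μ + ν)·W₀ for a fixed W₀ and E is a multiple of μ − 3ν, whence
L₁ = 12(μ + ν)²(μ − 3ν). At μ = 3, ν = c⁻¹ this vanishes at c = 1, where the derivative in c
is 576.
-/

open Finset

/-- Kulkarni–Nomizu product of two 2-tensors: (S∧T)_{ijkl}. -/
def KN {n : ℕ} (S T : Fin n → Fin n → ℝ) : Fin n → Fin n → Fin n → Fin n → ℝ :=
  fun i j k l => S i k * T j l + S j l * T i k - S i l * T j k - S j k * T i l

/-- Composition of 2-tensors (as endomorphisms, indices raised by the standard metric). -/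
noncomputable def comp2 {n : ℕ} (S T : Fin n → Fin n → ℝ) : Fin n → Fin n → ℝ :=
  fun i j => ∑ u, S i u * T u j

/-- Composition of curvature-type 4-tensors: (A∘B)_{ijkl} = (1/2) A_{ij}^{uv} B_{uvkl}. -/
noncomputable def comp4 {n : ℕ} (A B : Fin n → Fin n → Fin n → Fin n → ℝ) :
    Fin n → Fin n → Fin n → Fin n → ℝ :=
  fun i j k l => (1 / 2 : ℝ) * ∑ u, ∑ v, A i j u v * B u v k l

/-- Partial (Ricci-type) trace of a 4-tensor: (tr A)_{ij} = A_{iuj}^{u}. -/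
noncomputable def ptr {n : ℕ} (A : Fin n → Fin n → Fin n → Fin n → ℝ) :
    Fin n → Fin n → ℝ :=
  fun i j => ∑ u, A i u j u

/-- Full trace of a 2-tensor. -/
noncomputable def tr2 {n : ℕ} (S : Fin n → Fin n → ℝ) : ℝ := ∑ i, S i i

/-- Inner product of 2-tensors (standard metric). -/
noncomputable def inner2 {n : ℕ} (S T : Fin n → Fin n → ℝ) : ℝ := ∑ i, ∑ j, S i j * T i j

/-- The first-factor metric on ℝ^m ⊕ ℝ^{6-m} ≅ ℝ⁶, extended by zero. -/
def g6 (m : ℕ) : Fin 6 → Fin 6 → ℝ := fun i j => if i = j ∧ (i : ℕ) < m then 1 else 0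

/-- The second-factor metric on ℝ^m ⊕ ℝ^{6-m} ≅ ℝ⁶, extended by zero. -/
def h6 (m : ℕ) : Fin 6 → Fin 6 → ℝ := fun i j => if i = j ∧ m ≤ (i : ℕ) then 1 else 0

/-- The standard inner product ḡ on ℝ⁶. -/
def gb6 : Fin 6 → Fin 6 → ℝ := fun i j => if i = j then 1 else 0

/-- Curvature model of a product of spaceforms of dimensions m and 6−m with
sectional curvatures μ and ν: R = (μ/2) g∧g + (ν/2) h∧h. -/
noncomputable def Rm (m : ℕ) (μ ν : ℝ) : Fin 6 → Fin 6 → Fin 6 → Fin 6 → ℝ :=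
  fun i j k l => (μ / 2) * KN (g6 m) (g6 m) i j k l + (ν / 2) * KN (h6 m) (h6 m) i j k l

/-- J = tr_ḡ(Ric)/10 in dimension six. -/
noncomputable def Jm (m : ℕ) (μ ν : ℝ) : ℝ := tr2 (ptr (Rm m μ ν)) / 10

/-- Schouten tensor P = (Ric − Jḡ)/4 in dimension six. -/
noncomputable def Pm (m : ℕ) (μ ν : ℝ) : Fin 6 → Fin 6 → ℝ :=
  fun i j => (ptr (Rm m μ ν) i j - Jm m μ ν * gb6 i j) / 4

/-- Trace-free Schouten tensor E = P − (J/6)ḡ. -/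
noncomputable def Em (m : ℕ) (μ ν : ℝ) : Fin 6 → Fin 6 → ℝ :=
  fun i j => Pm m μ ν i j - (Jm m μ ν / 6) * gb6 i j

/-- Weyl tensor W = R − P∧ḡ. -/
noncomputable def Wm (m : ℕ) (μ ν : ℝ) : Fin 6 → Fin 6 → Fin 6 → Fin 6 → ℝ :=
  fun i j k l => Rm m μ ν i j k l - KN (Pm m μ ν) gb6 i j k l

/-- W² = W∘W. -/
noncomputable def W2m (m : ℕ) (μ ν : ℝ) := comp4 (Wm m μ ν) (Wm m μ ν)

/-- W³ = W∘W∘W. -/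
noncomputable def W3m (m : ℕ) (μ ν : ℝ) := comp4 (Wm m μ ν) (W2m m μ ν)

/-- Q = −(40/9)J³ + 16J|E|² − 16 tr E³ − 8 W_{ijkl}E^{ik}E^{jl}. -/
noncomputable def Qm (m : ℕ) (μ ν : ℝ) : ℝ :=
  -(40 / 9) * (Jm m μ ν) ^ 3 + 16 * Jm m μ ν * inner2 (Em m μ ν) (Em m μ ν)
    - 16 * tr2 (comp2 (Em m μ ν) (comp2 (Em m μ ν) (Em m μ ν)))
    - 8 * ∑ i, ∑ j, ∑ k, ∑ l, Wm m μ ν i j k l * Em m μ ν i k * Em m μ ν j l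

/-- L₁ = 96⟨E, tr W²⟩. -/
noncomputable def L1m (m : ℕ) (μ ν : ℝ) : ℝ := 96 * inner2 (Em m μ ν) (ptr (W2m m μ ν))

/-- L₂ = 16⟨E, tr W²⟩ − (4/3) J tr² W². -/
noncomputable def L2m (m : ℕ) (μ ν : ℝ) : ℝ :=
  16 * inner2 (Em m μ ν) (ptr (W2m m μ ν)) - (4 / 3) * Jm m μ ν * tr2 (ptr (W2m m μ ν))

/-- L₃ = 4 tr² W³. -/
noncomputable def L3m (m : ℕ) (μ ν : ℝ) : ℝ := 4 * tr2 (ptr (W3m m μ ν))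

/-- L₁ of the model S²(curvature 3) × S⁴(curvature c⁻¹), as a function of c. -/
noncomputable def L1fun : ℝ → ℝ := fun c => L1m 2 3 c⁻¹

theorem half_mul_sum_sum_eq_of_eq_add_swap {ι : Type*} [Fintype ι] {f g : ι → ι → ℝ}
    (h : ∀ u v, f u v = g u v + g v u) :
    (1 / 2 : ℝ) * ∑ u, ∑ v, f u v = ∑ u, ∑ v, g u v := by
  simp only [h, sum_add_distrib]
  rw [Finset.sum_comm (f := fun u v => g v u)]
  ring

section TensorAlgebra

variable {n : ℕ} (r : ℝ) (A B C : Fin n → Fin n → Fin n → Fin n → ℝ) (S T U : Fin n → Fin n → ℝ)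

theorem comp4_add_left : comp4 (A + B) C = comp4 A C + comp4 B C := by
  ext; simp only [comp4, Pi.add_apply, add_mul, sum_add_distrib, mul_add]

theorem comp4_add_right : comp4 A (B + C) = comp4 A B + comp4 A C := by
  ext; simp only [comp4, Pi.add_apply, mul_add, sum_add_distrib]

theorem comp4_smul_left : comp4 (r • A) B = r • comp4 A B := by
  ext; simp only [comp4, Pi.smul_apply, smul_eq_mul, mul_assoc, ← mul_sum]; ring

theorem comp4_smul_right : comp4 A (r • B) = r • comp4 A B := by
  ext; simp only [comp4, Pi.smul_apply, smul_eq_mul, mul_left_comm _ r, ← mul_sum]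

theorem ptr_add : ptr (A + B) = ptr A + ptr B := by
  ext; simp only [ptr, Pi.add_apply, sum_add_distrib]

theorem ptr_smul : ptr (r • A) = r • ptr A := by
  ext; simp only [ptr, Pi.smul_apply, smul_eq_mul, ← mul_sum]

theorem tr2_add : tr2 (S + T) = tr2 S + tr2 T := by
  simp only [tr2, Pi.add_apply, sum_add_distrib]

theorem tr2_smul : tr2 (r • S) = r * tr2 S := by
  simp only [tr2, Pi.smul_apply, smul_eq_mul, ← mul_sum]

theorem inner2_add_left : inner2 (S + T) U = inner2 S U + inner2 T U := by
  simp only [inner2, Pi.add_apply, add_mul, sum_add_distrib]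

theorem inner2_smul_left : inner2 (r • S) T = r * inner2 S T := by
  simp only [inner2, Pi.smul_apply, smul_eq_mul, mul_assoc, ← mul_sum]

theorem inner2_add_right : inner2 S (T + U) = inner2 S T + inner2 S U := by
  simp only [inner2, Pi.add_apply, mul_add, sum_add_distrib]

theorem inner2_smul_right : inner2 S (r • T) = r * inner2 S T := by
  simp only [inner2, Pi.smul_apply, smul_eq_mul, mul_left_comm _ r, ← mul_sum]

theorem ptr_KN : ptr (KN S T) = tr2 T • S + tr2 S • T - comp2 S T - comp2 T S := by
  ext i j
  simp only [ptr, KN, tr2, comp2, Pi.add_apply, Pi.sub_apply, Pi.smul_apply, smul_eq_mul,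
    sum_add_distrib, sum_sub_distrib, ← mul_sum, ← sum_mul]
  simp only [mul_comm (S _ j)]

theorem comp4_KN_KN (D : Fin n → Fin n → ℝ) :
    comp4 (KN S T) (KN U D) = KN (comp2 S U) (comp2 T D) + KN (comp2 S D) (comp2 T U) := by
  ext i j k l
  simp only [comp4, KN, comp2, Pi.add_apply, sum_mul_sum, ← sum_add_distrib, ← sum_sub_distrib]
  -- each of the 16 products in the summand occurs in the right-hand side once as the
  -- (u, v)-term and once as the (v, u)-term
  apply half_mul_sum_sum_eq_of_eq_add_swap
  intro u v
  ring

end TensorAlgebra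

section ProductSplitting
variable (m : ℕ)

theorem gb6_eq_g6_add_h6 : gb6 = g6 m + h6 m := by
  ext i j; simp only [gb6, g6, h6, Pi.add_apply]; split_ifs <;> grind

theorem comp2_g6_g6 : comp2 (g6 m) (g6 m) = g6 m := by
  ext i j
  rw [comp2, Fintype.sum_eq_single j fun u hu => by simp [g6, hu]]
  simp only [g6]; split_ifs <;> grind

theorem comp2_h6_h6 : comp2 (h6 m) (h6 m) = h6 m := by
  ext i j
  rw [comp2, Fintype.sum_eq_single j fun u hu => by simp [h6, hu]]
  simp only [h6]; split_ifs <;> grind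

theorem comp2_g6_h6 : comp2 (g6 m) (h6 m) = 0 := by
  ext i j
  rw [comp2, Fintype.sum_eq_single j fun u hu => by simp [h6, hu]]
  simp only [g6, h6, Pi.zero_apply]; split_ifs <;> grind

theorem comp2_h6_g6 : comp2 (h6 m) (g6 m) = 0 := by
  ext i j
  rw [comp2, Fintype.sum_eq_single j fun u hu => by simp [g6, hu]]
  simp only [g6, h6, Pi.zero_apply]; split_ifs <;> grind

theorem inner2_g6_h6 : inner2 (g6 m) (h6 m) = 0 := by
  refine sum_eq_zero fun i _ => sum_eq_zero fun j _ => ?_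
  simp only [g6, h6]; split_ifs <;> grind

theorem inner2_h6_g6 : inner2 (h6 m) (g6 m) = 0 := by
  refine sum_eq_zero fun i _ => sum_eq_zero fun j _ => ?_
  simp only [g6, h6]; split_ifs <;> grind

end ProductSplitting

section ProductModel

variable (μ ν : ℝ)

local notation "𝐠" => g6 2
local notation "𝐡" => h6 2

theorem tr2_g6_two : tr2 𝐠 = 2 := by
  simp only [tr2, g6, Fin.sum_univ_six]; norm_num [Fin.ext_iff]

theorem tr2_h6_two : tr2 𝐡 = 4 := by
  simp only [tr2, h6, Fin.sum_univ_six]; norm_num [Fin.ext_iff]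

theorem inner2_g6_g6_two : inner2 𝐠 𝐠 = 2 := by
  simp only [inner2, g6, Fin.sum_univ_six]; norm_num [Fin.ext_iff]

theorem inner2_h6_h6_two : inner2 𝐡 𝐡 = 4 := by
  simp only [inner2, h6, Fin.sum_univ_six]; norm_num [Fin.ext_iff]

theorem ptr_Rm_two : ptr (Rm 2 μ ν) = μ • 𝐠 + (3 * ν) • 𝐡 := by
  have hR : Rm 2 μ ν = (μ / 2) • KN 𝐠 𝐠 + (ν / 2) • KN 𝐡 𝐡 := rfl
  rw [hR, ptr_add, ptr_smul, ptr_smul, ptr_KN, ptr_KN, comp2_g6_g6, comp2_h6_h6,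
    tr2_g6_two, tr2_h6_two]
  ext i j
  simp only [Pi.add_apply, Pi.sub_apply, Pi.smul_apply, smul_eq_mul]
  ring

theorem Jm_two : Jm 2 μ ν = (μ + 6 * ν) / 5 := by
  rw [Jm, ptr_Rm_two, tr2_add, tr2_smul, tr2_smul, tr2_g6_two, tr2_h6_two]
  ring

theorem Pm_two : Pm 2 μ ν = ((2 * μ - 3 * ν) / 10) • 𝐠 + ((9 * ν - μ) / 20) • 𝐡 := by
  ext i j
  simp only [Pm, ptr_Rm_two, Jm_two, gb6_eq_g6_add_h6 2, Pi.add_apply, Pi.smul_apply, smul_eq_mul]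
  ring

theorem Em_two : Em 2 μ ν = ((μ - 3 * ν) / 6) • 𝐠 + (-(μ - 3 * ν) / 12) • 𝐡 := by
  ext i j
  simp only [Em, Pm_two, Jm_two, gb6_eq_g6_add_h6 2, Pi.add_apply, Pi.smul_apply, smul_eq_mul]
  ring

theorem Wm_two : Wm 2 μ ν =
    (μ + ν) • ((3 / 10 : ℝ) • KN 𝐠 𝐠 + (1 / 20 : ℝ) • KN 𝐡 𝐡 + (-3 / 20 : ℝ) • KN 𝐠 𝐡) := by
  ext i j k l
  simp only [Wm, Rm, KN, Pm_two, gb6_eq_g6_add_h6 2, Pi.add_apply, Pi.smul_apply, smul_eq_mul]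
  ring

theorem W2m_two : W2m 2 μ ν =
    (μ + ν) ^ 2 • ((9 / 50 : ℝ) • KN 𝐠 𝐠 + (1 / 200 : ℝ) • KN 𝐡 𝐡 + (9 / 400 : ℝ) • KN 𝐠 𝐡) := by
  simp only [W2m, Wm_two, comp4_add_left, comp4_add_right, comp4_smul_left, comp4_smul_right,
    comp4_KN_KN, comp2_g6_g6, comp2_h6_h6, comp2_g6_h6, comp2_h6_g6]
  ext i j k l
  simp only [KN, Pi.add_apply, Pi.smul_apply, Pi.zero_apply, smul_eq_mul]
  ring

theorem ptr_W2m_two : ptr (W2m 2 μ ν) = (μ + ν) ^ 2 • ((9 / 20 : ℝ) • 𝐠 + (3 / 40 : ℝ) • 𝐡) := by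
  simp only [W2m_two, ptr_add, ptr_smul, ptr_KN, comp2_g6_g6, comp2_h6_h6, comp2_g6_h6,
    comp2_h6_g6, tr2_g6_two, tr2_h6_two]
  ext i j
  simp only [Pi.add_apply, Pi.sub_apply, Pi.smul_apply, Pi.zero_apply, smul_eq_mul]
  ring

theorem L1m_two : L1m 2 μ ν = 12 * (μ + ν) ^ 2 * (μ - 3 * ν) := by
  simp only [L1m, Em_two, ptr_W2m_two, inner2_add_left, inner2_smul_left, inner2_add_right,
    inner2_smul_right, inner2_g6_g6_two, inner2_h6_h6_two, inner2_g6_h6, inner2_h6_g6]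
  ring

end ProductModel

theorem stmt14 :
    (∀ c : ℝ, 0 < c → L1fun c = 12 * (3 + c⁻¹) ^ 2 * (3 - 3 * c⁻¹)) ∧
    L1fun 1 = 0 ∧ deriv L1fun 1 ≠ 0 := by
  have hL1 : L1fun = (fun x : ℝ => 12 * (3 + x) ^ 2 * (3 - 3 * x)) ∘ (·⁻¹) := by
    funext c
    simp only [L1fun, L1m_two, Function.comp_apply]
  have hpoly : HasDerivAt (fun x : ℝ => 12 * (3 + x) ^ 2 * (3 - 3 * x)) (-576) (1 : ℝ)⁻¹ := by
    rw [inv_one]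
    exact (((((hasDerivAt_id' (1 : ℝ)).const_add 3).pow 2).const_mul 12).mul
      (((hasDerivAt_id' (1 : ℝ)).const_mul 3).const_sub 3)).congr_deriv (by norm_num)
  have hderiv : HasDerivAt L1fun 576 1 := by
    rw [hL1]
    exact (hpoly.comp 1 (hasDerivAt_inv one_ne_zero)).congr_deriv (by norm_num)
  refine ⟨fun c _ => L1m_two 3 c⁻¹, ?_, ?_⟩
  · rw [hL1]; norm_num
  · rw [hderiv.deriv]; norm_num
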